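/- For a 1-parameter formal deformation g_t = Σ_{i≥0} G_i t^i of a Hom-Novikov superalgebra (A, *, α), the first-order term G₁ is a 2-Hom-cocycle: δ²_hom G₁ = 0. -/

import Mathlib

/-- A 1-parameter formal deformation of a Hom-Novikov superalgebra, given by its
sequence of coefficient bilinear maps. -/
def IsDeformation {𝕜 A : Type*} [Field 𝕜] [AddCommGroup A] [Module 𝕜 A]
    (G : ZMod 2 → Submodule 𝕜 A) (mul : A →ₗ[𝕜] A →ₗ[𝕜] A) (α : A →ₗ[𝕜] A)
    (Gd : ℕ → A →ₗ[𝕜] A →ₗ[𝕜] A) : Prop :=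
  Gd 0 = mul ∧
  (∀ n : ℕ, ∀ i j : ZMod 2, ∀ x ∈ G i, ∀ y ∈ G j, Gd n x y ∈ G (i + j)) ∧
  (∀ n : ℕ, ∀ x y : A, α (Gd n x y) = Gd n (α x) (α y)) ∧
  (∀ n : ℕ, ∀ i j k : ZMod 2, ∀ x ∈ G i, ∀ y ∈ G j, ∀ z ∈ G k,
    ∑ p ∈ Finset.HasAntidiagonal.antidiagonal n,
      (Gd p.1 (α x) (Gd p.2 y z) - Gd p.1 (Gd p.2 x y) (α z)
        - ((-1 : 𝕜) ^ (i.val * j.val)) •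
            (Gd p.1 (α y) (Gd p.2 x z) - Gd p.1 (Gd p.2 y x) (α z))) = 0) ∧
  (∀ n : ℕ, ∀ i j k : ZMod 2, ∀ x ∈ G i, ∀ y ∈ G j, ∀ z ∈ G k,
    ∑ p ∈ Finset.HasAntidiagonal.antidiagonal n,
      (Gd p.1 (Gd p.2 x y) (α z)
        - ((-1 : 𝕜) ^ (j.val * k.val)) • Gd p.1 (Gd p.2 x z) (α y)) = 0)

/-!
The deformation identities hold coefficientwise in `t`. Since `G₀` is the multiplication, the
`t¹` coefficient of each identity is the sum of the terms with one factor `G₁` and the other `G₀`;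
the coboundary `δ²_hom G₁` is exactly the sum of the `t¹` coefficients of the two identities.
-/

theorem Finset.Nat.sum_antidiagonal_one {M : Type*} [AddCommMonoid M] (f : ℕ × ℕ → M) :
    ∑ p ∈ Finset.HasAntidiagonal.antidiagonal 1, f p = f (0, 1) + f (1, 0) := by
  simp [Finset.Nat.sum_antidiagonal_succ]

namespace IsDeformation

variable {𝕜 A : Type*} [Field 𝕜] [AddCommGroup A] [Module 𝕜 A]
  {G : ZMod 2 → Submodule 𝕜 A} {mul : A →ₗ[𝕜] A →ₗ[𝕜] A} {α : A →ₗ[𝕜] A}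
  {Gd : ℕ → A →ₗ[𝕜] A →ₗ[𝕜] A}

theorem left_symm_coeff_one (h : IsDeformation G mul α Gd) {i j k : ZMod 2} {x y z : A}
    (hx : x ∈ G i) (hy : y ∈ G j) (hz : z ∈ G k) :
    mul (α x) (Gd 1 y z) - mul (Gd 1 x y) (α z)
        - ((-1 : 𝕜) ^ (i.val * j.val)) • (mul (α y) (Gd 1 x z) - mul (Gd 1 y x) (α z))
      + (Gd 1 (α x) (mul y z) - Gd 1 (mul x y) (α z)
        - ((-1 : 𝕜) ^ (i.val * j.val)) • (Gd 1 (α y) (mul x z) - Gd 1 (mul y x) (α z))) = 0 := by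
  simpa only [Finset.Nat.sum_antidiagonal_one, h.1] using h.2.2.2.1 1 i j k x hx y hy z hz

theorem right_comm_coeff_one (h : IsDeformation G mul α Gd) {i j k : ZMod 2} {x y z : A}
    (hx : x ∈ G i) (hy : y ∈ G j) (hz : z ∈ G k) :
    mul (Gd 1 x y) (α z) - ((-1 : 𝕜) ^ (j.val * k.val)) • mul (Gd 1 x z) (α y)
      + (Gd 1 (mul x y) (α z) - ((-1 : 𝕜) ^ (j.val * k.val)) • Gd 1 (mul x z) (α y)) = 0 := by
  simpa only [Finset.Nat.sum_antidiagonal_one, h.1] using h.2.2.2.2 1 i j k x hx y hy z hz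

end IsDeformation

theorem stmt17_general
    (𝕜 A : Type*) [Field 𝕜] [AddCommGroup A] [Module 𝕜 A]
    (G : ZMod 2 → Submodule 𝕜 A)
    (mul : A →ₗ[𝕜] A →ₗ[𝕜] A) (α : A →ₗ[𝕜] A)
    (Gd : ℕ → A →ₗ[𝕜] A →ₗ[𝕜] A)
    (hGd : IsDeformation G mul α Gd) :
    ∀ i j k : ZMod 2, ∀ x ∈ G i, ∀ y ∈ G j, ∀ z ∈ G k,
      Gd 1 (α x) (mul y z)
        - ((-1 : 𝕜) ^ (i.val * j.val)) • Gd 1 (α y) (mul x z)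
        + ((-1 : 𝕜) ^ (i.val * j.val)) • Gd 1 (mul y x) (α z)
        + mul (α x) (Gd 1 y z)
        - ((-1 : 𝕜) ^ (i.val * j.val)) • mul (α y) (Gd 1 x z)
        + ((-1 : 𝕜) ^ (i.val * j.val)) • mul (Gd 1 y x) (α z)
        - ((-1 : 𝕜) ^ (j.val * k.val)) • Gd 1 (mul x z) (α y)
        - ((-1 : 𝕜) ^ (j.val * k.val)) • mul (Gd 1 x z) (α y) = 0 := by
  intro i j k x hx y hy z hz
  linear_combination (norm := module)
    hGd.left_symm_coeff_one hx hy hz + hGd.right_comm_coeff_one hx hy hz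

theorem stmt17
    (𝕜 A : Type*) [Field 𝕜] [AddCommGroup A] [Module 𝕜 A]
    (G : ZMod 2 → Submodule 𝕜 A) (hG : DirectSum.IsInternal G)
    (mul : A →ₗ[𝕜] A →ₗ[𝕜] A) (α : A →ₗ[𝕜] A)
    (hmul_even : ∀ i j : ZMod 2, ∀ x ∈ G i, ∀ y ∈ G j, mul x y ∈ G (i + j))
    (hα_even : ∀ i : ZMod 2, ∀ x ∈ G i, α x ∈ G i)
    (hα_mul : ∀ x y : A, α (mul x y) = mul (α x) (α y))
    (hls : ∀ i j k : ZMod 2, ∀ x ∈ G i, ∀ y ∈ G j, ∀ z ∈ G k,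
      mul (mul x y) (α z) - mul (α x) (mul y z)
        = ((-1 : 𝕜) ^ (i.val * j.val)) • (mul (mul y x) (α z) - mul (α y) (mul x z)))
    (hrn : ∀ i j k : ZMod 2, ∀ x ∈ G i, ∀ y ∈ G j, ∀ z ∈ G k,
      mul (mul x y) (α z) = ((-1 : 𝕜) ^ (j.val * k.val)) • mul (mul x z) (α y))
    (Gd : ℕ → A →ₗ[𝕜] A →ₗ[𝕜] A)
    (hGd : IsDeformation G mul α Gd) :
    ∀ i j k : ZMod 2, ∀ x ∈ G i, ∀ y ∈ G j, ∀ z ∈ G k,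
      Gd 1 (α x) (mul y z)
        - ((-1 : 𝕜) ^ (i.val * j.val)) • Gd 1 (α y) (mul x z)
        + ((-1 : 𝕜) ^ (i.val * j.val)) • Gd 1 (mul y x) (α z)
        + mul (α x) (Gd 1 y z)
        - ((-1 : 𝕜) ^ (i.val * j.val)) • mul (α y) (Gd 1 x z)
        + ((-1 : 𝕜) ^ (i.val * j.val)) • mul (Gd 1 y x) (α z)
        - ((-1 : 𝕜) ^ (j.val * k.val)) • Gd 1 (mul x z) (α y)
        - ((-1 : 𝕜) ^ (j.val * k.val)) • mul (Gd 1 x z) (α y) = 0 :=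
  stmt17_general 𝕜 A G mul α Gd hGd
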